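/- The sliding-integral operator (T y)(t) = ∫_{t−τ(t)}^{t} y(s) ds, where τ : ℝ → [0, τ̄] is measurable, has induced L²(ℝ) gain at most τ̄: ‖T y‖_{L²(ℝ)} ≤ τ̄ ‖y‖_{L²(ℝ)} for all y ∈ L²(ℝ, ℝⁿ). -/

import Mathlib

open MeasureTheory intervalIntegral Set
open scoped ENNReal

/-! Cauchy–Schwarz on the window `(t - τ t, t]`, whose length is at most `τ̄`, gives
`‖(T y) t‖² ≤ τ̄ ∫_{t-τ̄}^t ‖y‖²`. By Tonelli, integrating the right-hand side in `t` counts each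
`‖y s‖²` once for every `t ∈ [s, s + τ̄)`, a set of measure `τ̄`; hence `‖T y‖² ≤ τ̄² ‖y‖²`. -/

theorem ENNReal.lintegral_sq_le_measure_univ_mul {α : Type*} [MeasurableSpace α] (μ : Measure α)
    {f : α → ℝ≥0∞} (hf : AEMeasurable f μ) :
    (∫⁻ x, f x ∂μ) ^ 2 ≤ μ univ * ∫⁻ x, f x ^ 2 ∂μ := by
  have holder := ENNReal.lintegral_mul_le_Lp_mul_Lq μ Real.HolderConjugate.two_two
    aemeasurable_const hf (f := fun _ => 1)
  simp only [Pi.mul_apply, one_mul, ENNReal.one_rpow, lintegral_const, one_mul] at holder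
  calc (∫⁻ x, f x ∂μ) ^ 2
      ≤ ((μ univ) ^ (1 / 2 : ℝ) * (∫⁻ x, f x ^ (2 : ℝ) ∂μ) ^ (1 / 2 : ℝ)) ^ 2 := by gcongr
    _ = μ univ * ∫⁻ x, f x ^ 2 ∂μ := by
      simp only [mul_pow, ← ENNReal.rpow_natCast, ← ENNReal.rpow_mul]
      norm_num

theorem enorm_intervalIntegral_sq_le {E : Type*} [NormedAddCommGroup E] [NormedSpace ℝ E]
    {f : ℝ → E} {a b : ℝ} (hab : a ≤ b)
    (hf : AEStronglyMeasurable f (volume.restrict (Ioc a b))) :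
    ‖∫ s in a..b, f s‖ₑ ^ 2 ≤ ENNReal.ofReal (b - a) * ∫⁻ s in Ioc a b, ‖f s‖ₑ ^ 2 := by
  calc ‖∫ s in a..b, f s‖ₑ ^ 2
      ≤ (∫⁻ s in Ioc a b, ‖f s‖ₑ) ^ 2 := by
        rw [integral_of_le hab]
        gcongr
        exact enorm_integral_le_lintegral_enorm _
    _ ≤ ENNReal.ofReal (b - a) * ∫⁻ s in Ioc a b, ‖f s‖ₑ ^ 2 := by
        simpa only [Measure.restrict_apply_univ, Real.volume_Ioc] using
          ENNReal.lintegral_sq_le_measure_univ_mul _ hf.enorm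

theorem lintegral_setLIntegral_Ioc_sub_self (c : ℝ) {f : ℝ → ℝ≥0∞} (hf : AEMeasurable f) :
    ∫⁻ t, ∫⁻ s in Ioc (t - c) t, f s = ENNReal.ofReal c * ∫⁻ s, f s := by
  have mem_iff : ∀ s t, s ∈ Ioc (t - c) t ↔ t ∈ Ico s (s + c) := fun s t => by
    simp only [mem_Ioc, mem_Ico]
    constructor <;> rintro ⟨h₁, h₂⟩ <;> constructor <;> linarith
  have hF : AEMeasurable (Function.uncurry fun t s => (Ioc (t - c) t).indicator f s)
      (volume.prod volume) := by
    have hB : MeasurableSet {p : ℝ × ℝ | p.2 ∈ Ioc (p.1 - c) p.1} :=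
      (measurableSet_lt (measurable_fst.sub measurable_const) measurable_snd).inter
        (measurableSet_le measurable_snd measurable_fst)
    exact (hf.comp_quasiMeasurePreserving Measure.quasiMeasurePreserving_snd).indicator hB
  calc ∫⁻ t, ∫⁻ s in Ioc (t - c) t, f s
      = ∫⁻ t, ∫⁻ s, (Ioc (t - c) t).indicator f s :=
        lintegral_congr fun t => (lintegral_indicator measurableSet_Ioc f).symm
    _ = ∫⁻ s, ∫⁻ t, (Ico s (s + c)).indicator (fun _ => f s) t := by
        rw [lintegral_lintegral_swap hF]
        simp only [indicator_apply, mem_iff]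
    _ = ENNReal.ofReal c * ∫⁻ s, f s := by
        simp only [lintegral_indicator_const measurableSet_Ico, Real.volume_Ico,
          add_sub_cancel_left]
        rw [← lintegral_const_mul'' _ hf]
        simp only [mul_comm]

noncomputable def slidingIntegral {E : Type*} [NormedAddCommGroup E] [NormedSpace ℝ E]
    (τ : ℝ → ℝ) (y : ℝ → E) (t : ℝ) : E :=
  ∫ s in (t - τ t)..t, y s

theorem lintegral_enorm_slidingIntegral_sq_le {E : Type*} [NormedAddCommGroup E]
    [NormedSpace ℝ E] {τ : ℝ → ℝ} {c : ℝ} (hτ0 : ∀ t, 0 ≤ τ t) (hτc : ∀ t, τ t ≤ c)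
    {y : ℝ → E} (hy : AEStronglyMeasurable y) :
    ∫⁻ t, ‖slidingIntegral τ y t‖ₑ ^ 2 ≤ ENNReal.ofReal c ^ 2 * ∫⁻ s, ‖y s‖ₑ ^ 2 := by
  have pointwise (t : ℝ) : ‖slidingIntegral τ y t‖ₑ ^ 2 ≤
      ENNReal.ofReal c * ∫⁻ s in Ioc (t - c) t, ‖y s‖ₑ ^ 2 := by
    calc ‖slidingIntegral τ y t‖ₑ ^ 2
        ≤ ENNReal.ofReal (t - (t - τ t)) * ∫⁻ s in Ioc (t - τ t) t, ‖y s‖ₑ ^ 2 :=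
          enorm_intervalIntegral_sq_le (by linarith [hτ0 t]) hy.restrict
      _ ≤ ENNReal.ofReal c * ∫⁻ s in Ioc (t - c) t, ‖y s‖ₑ ^ 2 := by
          gcongr
          · linarith [hτc t]
          · exact hτc t
  calc ∫⁻ t, ‖slidingIntegral τ y t‖ₑ ^ 2
      ≤ ∫⁻ t, ENNReal.ofReal c * ∫⁻ s in Ioc (t - c) t, ‖y s‖ₑ ^ 2 := lintegral_mono pointwise
    _ = ENNReal.ofReal c ^ 2 * ∫⁻ s, ‖y s‖ₑ ^ 2 := by
      rw [lintegral_const_mul' _ _ ENNReal.ofReal_ne_top,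
        lintegral_setLIntegral_Ioc_sub_self c (hy.enorm.pow_const 2), ← mul_assoc, sq]

theorem integral_norm_sq_le_toReal_lintegral {α E : Type*} [MeasurableSpace α] {μ : Measure α}
    [NormedAddCommGroup E] (f : α → E) :
    ∫ x, ‖f x‖ ^ 2 ∂μ ≤ (∫⁻ x, ‖f x‖ₑ ^ 2 ∂μ).toReal := by
  by_cases hf : Integrable (fun x => ‖f x‖ ^ 2) μ
  · rw [integral_eq_lintegral_of_nonneg_ae (.of_forall fun x => by positivity)
      hf.aestronglyMeasurable]
    simp only [ENNReal.ofReal_pow (norm_nonneg _), ofReal_norm, le_refl]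
  · rw [integral_undef hf]
    exact ENNReal.toReal_nonneg

theorem MeasureTheory.MemLp.ofReal_integral_norm_sq {α E : Type*} [MeasurableSpace α]
    {μ : Measure α} [NormedAddCommGroup E] {f : α → E} (hf : MemLp f 2 μ) :
    ENNReal.ofReal (∫ x, ‖f x‖ ^ 2 ∂μ) = ∫⁻ x, ‖f x‖ₑ ^ 2 ∂μ := by
  rw [ofReal_integral_eq_lintegral_ofReal (hf.integrable_norm_pow two_ne_zero)
    (.of_forall fun x => by positivity)]
  simp only [ENNReal.ofReal_pow (norm_nonneg _), ofReal_norm]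

theorem sliding_integral_l2_gain_general {n : ℕ}
    (τbar : ℝ)
    (τ : ℝ → ℝ) (hτ0 : ∀ t, 0 ≤ τ t) (hτb : ∀ t, τ t ≤ τbar)
    (y : ℝ → EuclideanSpace ℝ (Fin n)) (hy : MemLp y 2 (volume : Measure ℝ)) :
    Real.sqrt (∫ t : ℝ, ‖∫ s in (t - τ t)..t, y s‖ ^ 2) ≤
      τbar * Real.sqrt (∫ s : ℝ, ‖y s‖ ^ 2) := by
  have hτbar : 0 ≤ τbar := (hτ0 0).trans (hτb 0)
  have energy : ∫ t, ‖slidingIntegral τ y t‖ ^ 2 ≤ τbar ^ 2 * ∫ s, ‖y s‖ ^ 2 := by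
    refine (integral_norm_sq_le_toReal_lintegral _).trans ?_
    refine ENNReal.toReal_le_of_le_ofReal (by positivity) ?_
    rw [ENNReal.ofReal_mul (by positivity), ENNReal.ofReal_pow hτbar, hy.ofReal_integral_norm_sq]
    exact lintegral_enorm_slidingIntegral_sq_le hτ0 hτb hy.aestronglyMeasurable
  calc Real.sqrt (∫ t, ‖slidingIntegral τ y t‖ ^ 2)
      ≤ Real.sqrt (τbar ^ 2 * ∫ s, ‖y s‖ ^ 2) := Real.sqrt_le_sqrt energy
    _ = τbar * Real.sqrt (∫ s, ‖y s‖ ^ 2) := by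
      rw [Real.sqrt_mul (sq_nonneg _), Real.sqrt_sq hτbar]

/-- The sliding-integral operator `(T y)(t) = ∫_{t-τ(t)}^{t} y(s) ds`, with
`τ : ℝ → [0, τ̄]` measurable, has induced `L²(ℝ)` gain at most `τ̄`. -/
theorem sliding_integral_l2_gain {n : ℕ}
    (τbar : ℝ) (hτbar : 0 < τbar)
    (τ : ℝ → ℝ) (hτ : Measurable τ) (hτ0 : ∀ t, 0 ≤ τ t) (hτb : ∀ t, τ t ≤ τbar)
    (y : ℝ → EuclideanSpace ℝ (Fin n)) (hy : MemLp y 2 (volume : Measure ℝ)) :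
    Real.sqrt (∫ t : ℝ, ‖∫ s in (t - τ t)..t, y s‖ ^ 2) ≤
      τbar * Real.sqrt (∫ s : ℝ, ‖y s‖ ^ 2) :=
  sliding_integral_l2_gain_general τbar τ hτ0 hτb y hy
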